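/- Let α > 0, β > 0, K ≥ 0, L > 0, let t₀ ∈ ℝ, and let V : [t₀, ∞) → (0, ∞) be continuously differentiable and satisfy −V'(t) ≥ α·(1 − K·e^{−βt})·V(t) for all t ≥ t₀. If e^{αt}·V(t) → L as t → ∞, then there exist constants K' ≥ 0 and T ≥ t₀ such that e^{αt}·V(t) ≥ L − K'·e^{−βt} for all t ≥ T, and consequently −V'(t) ≥ α·L·e^{−αt}·(1 − K''·e^{−βt}) for some constant K'' ≥ 0 and all sufficiently large t. -/

import Mathlib

/-- Let `α > 0`, `β > 0`, `K ≥ 0`, `L > 0`, `t₀ ∈ ℝ`, and let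
`V : [t₀,∞) → (0,∞)` be continuously differentiable with
`-V'(t) ≥ α·(1 - K·e^(-βt))·V(t)` for all `t ≥ t₀`. If `e^(αt)·V(t) → L` as `t → ∞`,
then there exist `K' ≥ 0` and `T ≥ t₀` with `e^(αt)·V(t) ≥ L - K'·e^(-βt)` for `t ≥ T`,
and consequently `-V'(t) ≥ α·L·e^(-αt)·(1 - K''·e^(-βt))` for some `K'' ≥ 0` and all
sufficiently large `t`. -/
theorem stmt_13 (α β K L t₀ : ℝ) (hα : 0 < α) (hβ : 0 < β) (hK : 0 ≤ K) (hL : 0 < L)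
    (V V' : ℝ → ℝ) (hVpos : ∀ t ∈ Set.Ici t₀, 0 < V t)
    (hderiv : ∀ t ∈ Set.Ici t₀, HasDerivWithinAt V (V' t) (Set.Ici t₀) t)
    (hV'cont : ContinuousOn V' (Set.Ici t₀))
    (hineq : ∀ t ∈ Set.Ici t₀, α * (1 - K * Real.exp (-β * t)) * V t ≤ -V' t)
    (hlim : Filter.Tendsto (fun t => Real.exp (α * t) * V t) Filter.atTop (nhds L)) :
    ∃ K' ≥ (0 : ℝ), ∃ T ≥ t₀,
      (∀ t ≥ T, L - K' * Real.exp (-β * t) ≤ Real.exp (α * t) * V t) ∧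
      ∃ K'' ≥ (0 : ℝ), ∃ T' ≥ t₀,
        ∀ t ≥ T', α * L * Real.exp (-α * t) * (1 - K'' * Real.exp (-β * t)) ≤ -V' t := by
  set C := α * K * (L + 1) / β with hCdef
  have hC0 : 0 ≤ C := by positivity
  -- W is eventually bounded by L + 1
  have hEv : ∀ᶠ t in Filter.atTop, Real.exp (α * t) * V t ≤ L + 1 :=
    hlim.eventually (eventually_le_nhds (by linarith))
  obtain ⟨T₂, hT₂⟩ := Filter.eventually_atTop.mp hEv
  set T₁ := max T₂ (t₀ + 1) with hT₁def
  have hT₁t₀ : t₀ < T₁ := lt_of_lt_of_le (by linarith) (le_max_right _ _)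
  have hT₁T₂ : T₂ ≤ T₁ := le_max_left _ _
  -- V has usual derivative at interior points
  have hVd : ∀ t, t₀ < t → HasDerivAt V (V' t) t := fun t ht =>
    (hderiv t (le_of_lt ht)).hasDerivAt (Ici_mem_nhds ht)
  set F : ℝ → ℝ := fun t => Real.exp (α * t) * V t + C * Real.exp (-β * t) with hFdef
  have hFd : ∀ t, t₀ < t → HasDerivAt F
      (α * Real.exp (α * t) * V t + Real.exp (α * t) * V' t - C * β * Real.exp (-β * t)) t := by
    intro t ht
    have h1 : HasDerivAt (fun s : ℝ => Real.exp (α * s)) (Real.exp (α * t) * α) t := by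
      simpa using ((hasDerivAt_id t).const_mul α).exp
    have h2 : HasDerivAt (fun s : ℝ => Real.exp (-β * s)) (Real.exp (-β * t) * (-β)) t := by
      simpa using ((hasDerivAt_id t).const_mul (-β)).exp
    have := (h1.mul (hVd t ht)).add ((h2.const_mul C))
    exact this.congr_deriv (by ring)
  have hVcont : ContinuousOn V (Set.Ici t₀) := fun t ht => (hderiv t ht).continuousWithinAt
  have hFcont : ContinuousOn F (Set.Ici T₁) := by
    apply ContinuousOn.add
    · exact (Real.continuous_exp.comp (continuous_const.mul continuous_id)).continuousOn.mul
        (hVcont.mono (Set.Ici_subset_Ici.mpr hT₁t₀.le))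
    · exact (continuous_const.mul
        (Real.continuous_exp.comp (continuous_const.mul continuous_id))).continuousOn
  have hFderiv_nonpos : ∀ t ∈ interior (Set.Ici T₁), deriv F t ≤ 0 := by
    intro t ht
    rw [interior_Ici] at ht
    have ht' : t₀ < t := lt_trans hT₁t₀ ht
    rw [(hFd t ht').deriv]
    have hi := hineq t ht'.le
    have hW : Real.exp (α * t) * V t ≤ L + 1 := hT₂ t (le_trans hT₁T₂ ht.le)
    have hea : (0 : ℝ) < Real.exp (α * t) := Real.exp_pos _
    have heb : (0 : ℝ) < Real.exp (-β * t) := Real.exp_pos _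
    have hCβ : C * β = α * K * (L + 1) := by
      rw [hCdef, div_mul_cancel₀ _ hβ.ne']
    -- e^{αt} V' t ≤ -α e^{αt} V t + α K e^{-βt} e^{αt} V t
    have h3 : Real.exp (α * t) * V' t ≤
        Real.exp (α * t) * (-(α * (1 - K * Real.exp (-β * t)) * V t)) := by
      have := mul_le_mul_of_nonneg_left (neg_le_neg hi) hea.le
      simpa using this
    have h4 : α * K * Real.exp (-β * t) * (Real.exp (α * t) * V t) ≤
        α * K * Real.exp (-β * t) * (L + 1) :=
      mul_le_mul_of_nonneg_left hW (by positivity)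
    nlinarith [h3, h4]
  have hFdiff : DifferentiableOn ℝ F (interior (Set.Ici T₁)) := by
    intro t ht
    rw [interior_Ici] at ht
    exact ((hFd t (lt_trans hT₁t₀ ht)).differentiableAt).differentiableWithinAt
  have hFanti : AntitoneOn F (Set.Ici T₁) :=
    antitoneOn_of_deriv_nonpos (convex_Ici T₁) hFcont hFdiff hFderiv_nonpos
  -- F tends to L at infinity
  have hexp0 : Filter.Tendsto (fun s : ℝ => Real.exp (-β * s)) Filter.atTop (nhds 0) := by
    have : Filter.Tendsto (fun s : ℝ => -β * s) Filter.atTop Filter.atBot :=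
      Filter.Tendsto.const_mul_atTop_of_neg (neg_neg_iff_pos.mpr hβ) Filter.tendsto_id
    exact Real.tendsto_exp_atBot.comp this
  have hFl : Filter.Tendsto F Filter.atTop (nhds L) := by
    have := hlim.add (hexp0.const_mul C)
    simpa [hFdef, neg_mul] using this
  -- main lower bound
  have hmain : ∀ t ≥ T₁, L - C * Real.exp (-β * t) ≤ Real.exp (α * t) * V t := by
    intro t ht
    have hle : L ≤ F t := by
      apply le_of_tendsto hFl
      filter_upwards [Filter.eventually_ge_atTop t] with s hs
      exact hFanti ht (le_trans ht hs) hs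
    simp only [hFdef] at hle
    linarith
  refine ⟨C, hC0, T₁, hT₁t₀.le, hmain, K + C / L, by positivity,
    max T₁ (Real.log (K + 1) / β), le_trans hT₁t₀.le (le_max_left _ _), ?_⟩
  intro t ht
  have ht₁ : T₁ ≤ t := le_trans (le_max_left _ _) ht
  have ht₀ : t₀ ≤ t := le_trans hT₁t₀.le ht₁
  have heb : (0 : ℝ) < Real.exp (-β * t) := Real.exp_pos _
  have hea : (0 : ℝ) < Real.exp (α * t) := Real.exp_pos _
  have hen : (0 : ℝ) < Real.exp (-α * t) := Real.exp_pos _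
  have hprod : Real.exp (-α * t) * Real.exp (α * t) = 1 := by
    rw [← Real.exp_add]; ring_nf; exact Real.exp_zero
  -- K e^{-βt} ≤ 1
  have ha1 : K * Real.exp (-β * t) ≤ 1 := by
    have hlog : Real.log (K + 1) / β ≤ t := le_trans (le_max_right _ _) ht
    have : Real.exp (-β * t) ≤ Real.exp (-Real.log (K + 1)) := by
      apply Real.exp_le_exp.mpr
      nlinarith [(div_le_iff₀ hβ).mp hlog]
    have hK1 : Real.exp (-Real.log (K + 1)) = (K + 1)⁻¹ := by
      rw [Real.exp_neg, Real.exp_log (by linarith : (0:ℝ) < K + 1)]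
    rw [hK1] at this
    have h2 : K * Real.exp (-β * t) ≤ K * (K + 1)⁻¹ :=
      mul_le_mul_of_nonneg_left this hK
    have h3 : K * (K + 1)⁻¹ ≤ 1 := by
      rw [mul_inv_le_iff₀ (by linarith : (0:ℝ) < K + 1)]; linarith
    linarith
  have hW := hmain t ht₁
  have hi := hineq t ht₀
  -- V t ≥ e^{-αt}(L - C e^{-βt})
  have h1 : Real.exp (-α * t) * (L - C * Real.exp (-β * t)) ≤ V t := by
    have := mul_le_mul_of_nonneg_left hW hen.le
    calc Real.exp (-α * t) * (L - C * Real.exp (-β * t))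
        ≤ Real.exp (-α * t) * (Real.exp (α * t) * V t) := this
      _ = V t := by rw [← mul_assoc, hprod, one_mul]
  have hfac : 0 ≤ α * (1 - K * Real.exp (-β * t)) := by nlinarith
  have h2 : α * (1 - K * Real.exp (-β * t)) * (Real.exp (-α * t) * (L - C * Real.exp (-β * t)))
      ≤ α * (1 - K * Real.exp (-β * t)) * V t := mul_le_mul_of_nonneg_left h1 hfac
  have hinner : L * (1 - (K + C / L) * Real.exp (-β * t)) ≤
      (1 - K * Real.exp (-β * t)) * (L - C * Real.exp (-β * t)) := by
    have hCL : C / L * L = C := div_mul_cancel₀ C hL.ne'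
    nlinarith [mul_nonneg (mul_nonneg hK heb.le) (mul_nonneg hC0 heb.le)]
  have h3 : α * L * Real.exp (-α * t) * (1 - (K + C / L) * Real.exp (-β * t)) ≤
      α * (1 - K * Real.exp (-β * t)) * (Real.exp (-α * t) * (L - C * Real.exp (-β * t))) := by
    have := mul_le_mul_of_nonneg_left hinner (by positivity : (0:ℝ) ≤ α * Real.exp (-α * t))
    nlinarith [this]
  linarith [h2, h3, hi]
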